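/- Let N = 2^p with p ≥ 8. For all frequencies (k_1,k_2) with -N/2+1 ≤ k_1,k_2 ≤ N/2 (not both zero), and for every bivariate Haar basis element h^e_{n,ℓ}, one has |⟨φ_{k_1,k_2}, h^e_{n,ℓ}⟩| ≤ min(1, 18π/max(|k_1|,|k_2|)). -/

import Mathlib

/-!
The coefficient factors as `N⁻¹ U₁ U₂` with `U_j = ∑ₜ ω_jᵗ h_j(t)`, `ω_j = e^{-2πik_j/N}`.
Each univariate `h_j` equals `±2^{(n-p)/2}` on two adjacent blocks of length `2^{p-n-1}`, so
`|U_j| ≤ 2^{(n-p)/2} · 2B` for any bound `B` on a geometric sum of `ω_j` over one block: trivially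
`B = 2^{p-n-1}`, and `B = 2/|ω_j - 1| ≤ N/(2|k_j|)` by Jordan's inequality
`|ω_j - 1| = 2|sin(πk_j/N)| ≥ 4|k_j|/N`. The trivial bound on both factors gives `2^{-n} ≤ 1`;
the geometric bound on the factor with the larger `|k_j|` gives `1/max(|k₁|,|k₂|)`.
-/

open Complex Real Finset

noncomputable def haarBlock (p n ℓ e t : ℕ) : ℂ :=
  if ℓ * 2 ^ (p - n) ≤ t ∧ t < ℓ * 2 ^ (p - n) + 2 ^ (p - n - 1) then
    (((2 : ℝ) ^ (((n : ℝ) - p) / 2) : ℝ) : ℂ)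
  else if ℓ * 2 ^ (p - n) + 2 ^ (p - n - 1) ≤ t ∧ t < (ℓ + 1) * 2 ^ (p - n) then
    (-1 : ℂ) ^ e * (((2 : ℝ) ^ (((n : ℝ) - p) / 2) : ℝ) : ℂ)
  else 0

/-- The bivariate Haar basis element `h^e_{n,ℓ}(t₁,t₂) = h^{e₁}_{n,ℓ₁}(t₁) h^{e₂}_{n,ℓ₂}(t₂)`. -/
noncomputable def haar2 (p n ℓ₁ ℓ₂ e₁ e₂ t₁ t₂ : ℕ) : ℂ :=
  haarBlock p n ℓ₁ e₁ t₁ * haarBlock p n ℓ₂ e₂ t₂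

/-- The two-dimensional discrete Fourier vector
`φ_{k₁,k₂}(t₁,t₂) = N^{-1} e^{2πi(t₁k₁+t₂k₂)/N}`, `N = 2^p`. -/
noncomputable def fourierVec2 (p : ℕ) (k₁ k₂ : ℤ) (t₁ t₂ : ℕ) : ℂ :=
  ((1 / (2 ^ p) : ℝ) : ℂ) *
    Complex.exp (2 * π * Complex.I * (t₁ * k₁ + t₂ * k₂) / 2 ^ p)

lemma norm_geom_sum_Ico_le {ω : ℂ} (hω : ‖ω‖ = 1) (hω1 : ω ≠ 1) (a b : ℕ) :
    ‖∑ t ∈ Ico a b, ω ^ t‖ ≤ 2 / ‖ω - 1‖ := by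
  rcases le_or_gt b a with hba | hab
  · rw [Ico_eq_empty_of_le hba, sum_empty, norm_zero]
    positivity
  · rw [geom_sum_Ico hω1 hab.le, norm_div]
    gcongr
    calc ‖ω ^ b - ω ^ a‖ ≤ ‖ω ^ b‖ + ‖ω ^ a‖ := norm_sub_le _ _
      _ = 2 := by rw [norm_pow, norm_pow, hω, one_pow]; norm_num

lemma mul_abs_le_norm_exp_I_mul_ofReal_sub_one {θ : ℝ} (hθ : |θ| ≤ π) :
    2 / π * |θ| ≤ ‖exp (I * θ) - 1‖ := by
  have hsin := mul_abs_le_abs_sin (x := θ / 2) (by rw [abs_div, abs_two]; linarith)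
  rw [abs_div, abs_two] at hsin
  rw [norm_exp_I_mul_ofReal_sub_one, norm_mul, Real.norm_eq_abs, Real.norm_eq_abs, abs_two]
  linear_combination 2 * hsin

lemma abs_le_two_pow_div_two {p : ℕ} {k : ℤ}
    (hk : -(2 ^ p : ℤ) / 2 + 1 ≤ k ∧ k ≤ 2 ^ p / 2) : |(k : ℝ)| ≤ 2 ^ p / 2 := by
  have h : 2 * |k| ≤ 2 ^ p := by
    generalize (2 : ℤ) ^ p = N at hk
    rw [← abs_two, ← abs_mul, abs_le]
    omega
  rw [← Int.cast_abs, le_div_iff₀ two_pos, mul_comm]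
  exact_mod_cast h

noncomputable def fourierRoot (p : ℕ) (k : ℤ) : ℂ :=
  exp (I * ((-(2 * π * k / 2 ^ p) : ℝ) : ℂ))

lemma norm_fourierRoot (p : ℕ) (k : ℤ) : ‖fourierRoot p k‖ = 1 :=
  norm_exp_I_mul_ofReal _

lemma le_norm_fourierRoot_sub_one {p : ℕ} {k : ℤ} (hk : |(k : ℝ)| ≤ 2 ^ p / 2) :
    4 * |(k : ℝ)| / 2 ^ p ≤ ‖fourierRoot p k - 1‖ := by
  have h2p : (0 : ℝ) < 2 ^ p := by positivity
  have habs : |(-(2 * π * k / 2 ^ p))| = 2 * π * |(k : ℝ)| / 2 ^ p := by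
    rw [abs_neg, abs_div, abs_mul, abs_of_pos (by positivity : (0 : ℝ) < 2 * π),
      abs_of_pos h2p]
  have hθ : |(-(2 * π * k / 2 ^ p))| ≤ π := by
    rw [habs, div_le_iff₀ h2p]
    nlinarith [pi_pos]
  calc 4 * |(k : ℝ)| / 2 ^ p = 2 / π * (2 * π * |(k : ℝ)| / 2 ^ p) := by field_simp; ring
    _ ≤ ‖fourierRoot p k - 1‖ := habs ▸ mul_abs_le_norm_exp_I_mul_ofReal_sub_one hθ

lemma starRingEnd_fourierVec2 (p : ℕ) (k₁ k₂ : ℤ) (t₁ t₂ : ℕ) :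
    starRingEnd ℂ (fourierVec2 p k₁ k₂ t₁ t₂) =
      ((1 / 2 ^ p : ℝ) : ℂ) * (fourierRoot p k₁ ^ t₁ * fourierRoot p k₂ ^ t₂) := by
  rw [fourierVec2, map_mul, conj_ofReal, fourierRoot, fourierRoot, ← Complex.exp_nat_mul,
    ← Complex.exp_nat_mul, ← Complex.exp_add, ← exp_conj]
  congr 2
  simp only [map_div₀, map_mul, map_add, map_pow, map_ofNat, conj_I, conj_ofReal, map_natCast,
    map_intCast]
  push_cast
  ring

section Haar

variable {p n ℓ : ℕ}

lemma two_pow_sub_eq_two_mul (hn : n < p) : 2 ^ (p - n) = 2 * 2 ^ (p - n - 1) := by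
  rw [← pow_succ']
  congr 1
  omega

lemma sum_mul_haarBlock (hn : n < p) (hℓ : ℓ < 2 ^ n) (e : ℕ) (f : ℕ → ℂ) :
    ∑ t ∈ range (2 ^ p), f t * haarBlock p n ℓ e t =
      (((2 : ℝ) ^ (((n : ℝ) - p) / 2) : ℝ) : ℂ) *
        (∑ t ∈ Ico (ℓ * 2 ^ (p - n)) (ℓ * 2 ^ (p - n) + 2 ^ (p - n - 1)), f t +
          (-1) ^ e * ∑ t ∈ Ico (ℓ * 2 ^ (p - n) + 2 ^ (p - n - 1))
            (ℓ * 2 ^ (p - n) + 2 ^ (p - n - 1) + 2 ^ (p - n - 1)), f t) := by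
  have hend : (ℓ + 1) * 2 ^ (p - n) = ℓ * 2 ^ (p - n) + 2 ^ (p - n - 1) + 2 ^ (p - n - 1) := by
    rw [add_mul, one_mul, two_pow_sub_eq_two_mul hn, two_mul, add_assoc]
  have hfit : (ℓ + 1) * 2 ^ (p - n) ≤ 2 ^ p :=
    calc (ℓ + 1) * 2 ^ (p - n) ≤ 2 ^ n * 2 ^ (p - n) := Nat.mul_le_mul_right _ hℓ
      _ = 2 ^ p := by rw [← pow_add, Nat.add_sub_cancel' hn.le]
  rw [range_eq_Ico, ← sum_subset (Ico_subset_Ico (Nat.zero_le _) (hend ▸ hfit)),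
    ← sum_Ico_consecutive _ (Nat.le_add_right _ _) (Nat.le_add_right _ _), mul_add, mul_sum,
    mul_sum, mul_sum]
  · congr 1 <;> refine sum_congr rfl fun t ht => ?_ <;> rw [mem_Ico] at ht
    · rw [haarBlock, if_pos ht, mul_comm]
    · rw [haarBlock, if_neg (by omega), if_pos ⟨ht.1, hend ▸ ht.2⟩]
      ring
  · intro t _ ht
    rw [mem_Ico] at ht
    rw [haarBlock, if_neg (by omega), if_neg (by omega), mul_zero]

lemma norm_sum_mul_haarBlock_le (hn : n < p) (hℓ : ℓ < 2 ^ n) (e : ℕ) {f : ℕ → ℂ} {B : ℝ}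
    (hB : ∀ a, ‖∑ t ∈ Ico a (a + 2 ^ (p - n - 1)), f t‖ ≤ B) :
    ‖∑ t ∈ range (2 ^ p), f t * haarBlock p n ℓ e t‖ ≤
      (2 : ℝ) ^ (((n : ℝ) - p) / 2) * (2 * B) := by
  rw [sum_mul_haarBlock hn hℓ, norm_mul, norm_real, Real.norm_of_nonneg (by positivity)]
  gcongr
  calc _ ≤ ‖∑ t ∈ Ico (ℓ * 2 ^ (p - n)) (ℓ * 2 ^ (p - n) + 2 ^ (p - n - 1)), f t‖ +
        ‖(-1 : ℂ) ^ e * ∑ t ∈ Ico (ℓ * 2 ^ (p - n) + 2 ^ (p - n - 1))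
          (ℓ * 2 ^ (p - n) + 2 ^ (p - n - 1) + 2 ^ (p - n - 1)), f t‖ := norm_add_le _ _
    _ ≤ B + B := by
      rw [norm_mul, norm_pow, norm_neg, norm_one, one_pow, one_mul]
      exact add_le_add (hB _) (hB _)
    _ = 2 * B := (two_mul B).symm

lemma two_rpow_mul_self_mul_two_pow (hn : n ≤ p) :
    (2 : ℝ) ^ (((n : ℝ) - p) / 2) * 2 ^ (((n : ℝ) - p) / 2) * 2 ^ (p - n) = 1 := by
  rw [← rpow_add two_pos, ← rpow_natCast, Nat.cast_sub hn, ← rpow_add two_pos]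
  ring_nf
  exact rpow_zero 2

lemma norm_sum_pow_mul_haarBlock_le (hn : n < p) (hℓ : ℓ < 2 ^ n) (e : ℕ) {ω : ℂ}
    (hω : ‖ω‖ = 1) :
    ‖∑ t ∈ range (2 ^ p), ω ^ t * haarBlock p n ℓ e t‖ ≤
      (2 : ℝ) ^ (((n : ℝ) - p) / 2) * 2 ^ (p - n) := by
  have hB (a : ℕ) : ‖∑ t ∈ Ico a (a + 2 ^ (p - n - 1)), ω ^ t‖ ≤ (2 ^ (p - n - 1) : ℕ) := by
    calc _ ≤ ∑ t ∈ Ico a (a + 2 ^ (p - n - 1)), ‖ω ^ t‖ := norm_sum_le _ _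
      _ = _ := by simp [hω]
  convert norm_sum_mul_haarBlock_le hn hℓ e hB using 2
  exact_mod_cast two_pow_sub_eq_two_mul hn

lemma norm_sum_fourierRoot_pow_mul_haarBlock_le (hn : n < p) (hℓ : ℓ < 2 ^ n) (e : ℕ) {k : ℤ}
    (hk0 : k ≠ 0) (hk : |(k : ℝ)| ≤ 2 ^ p / 2) :
    ‖∑ t ∈ range (2 ^ p), fourierRoot p k ^ t * haarBlock p n ℓ e t‖ ≤
      (2 : ℝ) ^ (((n : ℝ) - p) / 2) * (2 ^ p / |(k : ℝ)|) := by
  have hk_pos : 0 < |(k : ℝ)| := abs_pos.2 (Int.cast_ne_zero.2 hk0)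
  have hδ : 4 * |(k : ℝ)| / 2 ^ p ≤ ‖fourierRoot p k - 1‖ := le_norm_fourierRoot_sub_one hk
  have hω1 : fourierRoot p k ≠ 1 := by
    rw [← sub_ne_zero, ← norm_pos_iff]
    exact (by positivity : (0 : ℝ) < 4 * |(k : ℝ)| / 2 ^ p).trans_le hδ
  have hB (a : ℕ) : ‖∑ t ∈ Ico a (a + 2 ^ (p - n - 1)), fourierRoot p k ^ t‖ ≤
      2 / (4 * |(k : ℝ)| / 2 ^ p) :=
    (norm_geom_sum_Ico_le (norm_fourierRoot p k) hω1 _ _).trans (by gcongr)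
  convert norm_sum_mul_haarBlock_le hn hℓ e hB using 2
  field_simp
  ring

lemma norm_inner_le_of_norm_le (hn : n < p) {ℓ₁ ℓ₂ : ℕ} (hℓ₁ : ℓ₁ < 2 ^ n) (hℓ₂ : ℓ₂ < 2 ^ n)
    (e₁ e₂ : ℕ) {ω₁ ω₂ : ℂ} (hω₁ : ‖ω₁‖ = 1) (hω₂ : ‖ω₂‖ = 1) {B : ℝ}
    (hB : ‖∑ t ∈ range (2 ^ p), ω₁ ^ t * haarBlock p n ℓ₁ e₁ t‖ ≤
        (2 : ℝ) ^ (((n : ℝ) - p) / 2) * B ∨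
      ‖∑ t ∈ range (2 ^ p), ω₂ ^ t * haarBlock p n ℓ₂ e₂ t‖ ≤
        (2 : ℝ) ^ (((n : ℝ) - p) / 2) * B) :
    ‖((1 / 2 ^ p : ℝ) : ℂ) * ((∑ t ∈ range (2 ^ p), ω₁ ^ t * haarBlock p n ℓ₁ e₁ t) *
      ∑ t ∈ range (2 ^ p), ω₂ ^ t * haarBlock p n ℓ₂ e₂ t)‖ ≤ B / 2 ^ p := by
  have ha := two_rpow_mul_self_mul_two_pow hn.le
  have h₁ := norm_sum_pow_mul_haarBlock_le hn hℓ₁ e₁ hω₁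
  have h₂ := norm_sum_pow_mul_haarBlock_le hn hℓ₂ e₂ hω₂
  rw [norm_mul, norm_mul, norm_real, Real.norm_of_nonneg (by positivity), one_div_mul_eq_div]
  gcongr
  rcases hB with hB | hB
  · calc _ ≤ (2 : ℝ) ^ (((n : ℝ) - p) / 2) * B * ((2 : ℝ) ^ (((n : ℝ) - p) / 2) * 2 ^ (p - n)) :=
          mul_le_mul hB h₂ (norm_nonneg _) ((norm_nonneg _).trans hB)
      _ = B := by linear_combination B * ha
  · calc _ ≤ (2 : ℝ) ^ (((n : ℝ) - p) / 2) * 2 ^ (p - n) * ((2 : ℝ) ^ (((n : ℝ) - p) / 2) * B) :=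
          mul_le_mul h₁ hB (norm_nonneg _) ((norm_nonneg _).trans h₁)
      _ = B := by linear_combination B * ha

end Haar

lemma sum_conj_fourierVec2_mul_haar2 (p n ℓ₁ ℓ₂ e₁ e₂ : ℕ) (k₁ k₂ : ℤ) :
    ∑ t₁ ∈ range (2 ^ p), ∑ t₂ ∈ range (2 ^ p),
        starRingEnd ℂ (fourierVec2 p k₁ k₂ t₁ t₂) * haar2 p n ℓ₁ ℓ₂ e₁ e₂ t₁ t₂ =
      ((1 / 2 ^ p : ℝ) : ℂ) *
        ((∑ t ∈ range (2 ^ p), fourierRoot p k₁ ^ t * haarBlock p n ℓ₁ e₁ t) *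
          ∑ t ∈ range (2 ^ p), fourierRoot p k₂ ^ t * haarBlock p n ℓ₂ e₂ t) := by
  simp_rw [sum_mul_sum, mul_sum, starRingEnd_fourierVec2, haar2]
  refine sum_congr rfl fun t₁ _ => sum_congr rfl fun t₂ _ => ?_
  ring

theorem stmt_7_general (p : ℕ) (k₁ k₂ : ℤ)
    (hk1 : -(2 ^ p : ℤ) / 2 + 1 ≤ k₁ ∧ k₁ ≤ 2 ^ p / 2)
    (hk2 : -(2 ^ p : ℤ) / 2 + 1 ≤ k₂ ∧ k₂ ≤ 2 ^ p / 2)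
    (hk : ¬(k₁ = 0 ∧ k₂ = 0))
    (n ℓ₁ ℓ₂ e₁ e₂ : ℕ) (hn : n < p) (hℓ₁ : ℓ₁ < 2 ^ n) (hℓ₂ : ℓ₂ < 2 ^ n) :
    ‖(∑ t₁ ∈ Finset.range (2 ^ p), ∑ t₂ ∈ Finset.range (2 ^ p),
        (starRingEnd ℂ) (fourierVec2 p k₁ k₂ t₁ t₂) * haar2 p n ℓ₁ ℓ₂ e₁ e₂ t₁ t₂)‖ ≤
      min 1 (18 * π / max |(k₁ : ℝ)| |(k₂ : ℝ)|) := by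
  have h2p : (0 : ℝ) < 2 ^ p := by positivity
  have hbound (B : ℝ) := norm_inner_le_of_norm_le hn hℓ₁ hℓ₂ e₁ e₂ (norm_fourierRoot p k₁)
    (norm_fourierRoot p k₂) (B := B)
  rw [sum_conj_fourierVec2_mul_haar2]
  refine le_min ?_ ?_
  · refine (hbound _ (.inl
      (norm_sum_pow_mul_haarBlock_le hn hℓ₁ e₁ (norm_fourierRoot p k₁)))).trans ?_
    rw [div_le_one h2p]
    exact_mod_cast Nat.pow_le_pow_right two_pos (Nat.sub_le p n)
  · have hdiv (K : ℝ) (hK : 0 ≤ K) : 2 ^ p / K / 2 ^ p ≤ 18 * π / K := by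
      rw [div_div_cancel_left' h2p.ne', inv_eq_one_div]
      exact div_le_div_of_nonneg_right (by linarith [pi_gt_three]) hK
    rcases le_total |(k₂ : ℝ)| |(k₁ : ℝ)| with h | h
    · have hk₁ : k₁ ≠ 0 := by rintro rfl; exact hk ⟨rfl, by simpa using h⟩
      rw [max_eq_left h]
      exact (hbound _ (.inl (norm_sum_fourierRoot_pow_mul_haarBlock_le hn hℓ₁ e₁ hk₁
        (abs_le_two_pow_div_two hk1)))).trans (hdiv _ (abs_nonneg _))
    · have hk₂ : k₂ ≠ 0 := by rintro rfl; exact hk ⟨by simpa using h, rfl⟩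
      rw [max_eq_right h]
      exact (hbound _ (.inr (norm_sum_fourierRoot_pow_mul_haarBlock_le hn hℓ₂ e₂ hk₂
        (abs_le_two_pow_div_two hk2)))).trans (hdiv _ (abs_nonneg _))

/-- Bivariate local coherence bound: for `N = 2^p`, `p ≥ 8`, all frequencies
`(k₁,k₂)` with `-N/2+1 ≤ k₁,k₂ ≤ N/2`, not both zero, and every bivariate Haar
basis element `h^e_{n,ℓ}` with `e ∈ {(0,1),(1,0),(1,1)}`, one has
`|⟨φ_{k₁,k₂}, h^e_{n,ℓ}⟩| ≤ min(1, 18π/max(|k₁|,|k₂|))`. -/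
theorem stmt_7 (p : ℕ) (hp : 8 ≤ p) (k₁ k₂ : ℤ)
    (hk1 : -(2 ^ p : ℤ) / 2 + 1 ≤ k₁ ∧ k₁ ≤ 2 ^ p / 2)
    (hk2 : -(2 ^ p : ℤ) / 2 + 1 ≤ k₂ ∧ k₂ ≤ 2 ^ p / 2)
    (hk : ¬(k₁ = 0 ∧ k₂ = 0))
    (n ℓ₁ ℓ₂ e₁ e₂ : ℕ) (hn : n < p) (hℓ₁ : ℓ₁ < 2 ^ n) (hℓ₂ : ℓ₂ < 2 ^ n)
    (he₁ : e₁ ≤ 1) (he₂ : e₂ ≤ 1) (he : ¬(e₁ = 0 ∧ e₂ = 0)) :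
    ‖(∑ t₁ ∈ Finset.range (2 ^ p), ∑ t₂ ∈ Finset.range (2 ^ p),
        (starRingEnd ℂ) (fourierVec2 p k₁ k₂ t₁ t₂) * haar2 p n ℓ₁ ℓ₂ e₁ e₂ t₁ t₂)‖ ≤
      min 1 (18 * π / max |(k₁ : ℝ)| |(k₂ : ℝ)|) :=
  stmt_7_general p k₁ k₂ hk1 hk2 hk n ℓ₁ ℓ₂ e₁ e₂ hn hℓ₁ hℓ₂
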